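/- arXiv:1212.4902 — 10 statements merged into one kernel-verified Lean document; each statement's English description precedes it below -/
import Mathlib

section
/- Let K₁ and K₂ be M×M Hermitian positive semidefinite complex matrices with K₁ ⪯ K₂, and let S be an arbitrary M×N complex matrix. Then L(K₁, S) ⪯ L(K₂, S), where for each i the matrix I_N + S† Kᵢ S is positive definite (hence invertible), so L(Kᵢ, S) is well defined. -/
open scoped ComplexOrder Matrix

/-- For M×M Hermitian PSD complex matrices `K₁ ⪯ K₂` and an arbitrary M×N complex matrix `S`,
we have `L(K₁, S) ⪯ L(K₂, S)` where `L(K, S) = K - K S (I + Sᴴ K S)⁻¹ Sᴴ K`; moreover each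
`I + Sᴴ Kᵢ S` is positive definite (hence invertible), so `L(Kᵢ, S)` is well defined. -/
theorem loewner_mono_L {M N : ℕ} (K₁ K₂ : Matrix (Fin M) (Fin M) ℂ)
    (hK₁ : K₁.PosSemidef) (hK₂ : K₂.PosSemidef) (h12 : (K₂ - K₁).PosSemidef)
    (S : Matrix (Fin M) (Fin N) ℂ) :
    ((1 : Matrix (Fin N) (Fin N) ℂ) + Sᴴ * K₁ * S).PosDef ∧
    ((1 : Matrix (Fin N) (Fin N) ℂ) + Sᴴ * K₂ * S).PosDef ∧
    ((K₂ - K₂ * S * ((1 : Matrix (Fin N) (Fin N) ℂ) + Sᴴ * K₂ * S)⁻¹ * Sᴴ * K₂) -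
      (K₁ - K₁ * S * ((1 : Matrix (Fin N) (Fin N) ℂ) + Sᴴ * K₁ * S)⁻¹ * Sᴴ * K₁)).PosSemidef := by
  have hP₁ : ((1 : Matrix (Fin N) (Fin N) ℂ) + Sᴴ * K₁ * S).PosDef :=
    Matrix.PosDef.add_posSemidef Matrix.PosDef.one (hK₁.conjTranspose_mul_mul_same S)
  have hP₂ : ((1 : Matrix (Fin N) (Fin N) ℂ) + Sᴴ * K₂ * S).PosDef :=
    Matrix.PosDef.add_posSemidef Matrix.PosDef.one (hK₂.conjTranspose_mul_mul_same S)
  refine ⟨hP₁, hP₂, ?_⟩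
  set P₁ : Matrix (Fin N) (Fin N) ℂ := 1 + Sᴴ * K₁ * S with hP₁def
  set P₂ : Matrix (Fin N) (Fin N) ℂ := 1 + Sᴴ * K₂ * S with hP₂def
  set Q₁ : Matrix (Fin N) (Fin N) ℂ := P₁⁻¹ with hQ₁def
  set Q₂ : Matrix (Fin N) (Fin N) ℂ := P₂⁻¹ with hQ₂def
  have hd₁ : IsUnit P₁.det := (Matrix.isUnit_iff_isUnit_det _).1 hP₁.isUnit
  have hd₂ : IsUnit P₂.det := (Matrix.isUnit_iff_isUnit_det _).1 hP₂.isUnit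
  have hQP₁ : Q₁ * P₁ = 1 := Matrix.nonsing_inv_mul _ hd₁
  have hPQ₁ : P₁ * Q₁ = 1 := Matrix.mul_nonsing_inv _ hd₁
  have hQP₂ : Q₂ * P₂ = 1 := Matrix.nonsing_inv_mul _ hd₂
  have hPQ₂ : P₂ * Q₂ = 1 := Matrix.mul_nonsing_inv _ hd₂
  have hH₁ : K₁ᴴ = K₁ := hK₁.1
  have hH₂ : K₂ᴴ = K₂ := hK₂.1
  have hQH₁ : Q₁ᴴ = Q₁ := by
    rw [hQ₁def, Matrix.conjTranspose_nonsing_inv, hP₁.isHermitian]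
  have hQH₂ : Q₂ᴴ = Q₂ := by
    rw [hQ₂def, Matrix.conjTranspose_nonsing_inv, hP₂.isHermitian]
  -- rewrite rules eliminating `Sᴴ * Kᵢ * S` against the adjacent `Qᵢ`
  have hq₁ : Q₁ * (Sᴴ * K₁ * S) = 1 - Q₁ := by
    have : Q₁ * (1 + Sᴴ * K₁ * S) = 1 := hQP₁
    rw [Matrix.mul_add, Matrix.mul_one] at this
    linear_combination (norm := abel) this
  have hq₂ : Q₂ * (Sᴴ * K₂ * S) = 1 - Q₂ := by
    have : Q₂ * (1 + Sᴴ * K₂ * S) = 1 := hQP₂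
    rw [Matrix.mul_add, Matrix.mul_one] at this
    linear_combination (norm := abel) this
  have hq₁' : (Sᴴ * K₁ * S) * Q₁ = 1 - Q₁ := by
    have : (1 + Sᴴ * K₁ * S) * Q₁ = 1 := hPQ₁
    rw [Matrix.add_mul, Matrix.one_mul] at this
    linear_combination (norm := abel) this
  have hq₂' : (Sᴴ * K₂ * S) * Q₂ = 1 - Q₂ := by
    have : (1 + Sᴴ * K₂ * S) * Q₂ = 1 := hPQ₂
    rw [Matrix.add_mul, Matrix.one_mul] at this
    linear_combination (norm := abel) this
  have r₁ : ∀ {k : ℕ} (X : Matrix (Fin N) (Fin k) ℂ),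
      Q₁ * (Sᴴ * (K₁ * (S * X))) = X - Q₁ * X := by
    intro k X
    calc Q₁ * (Sᴴ * (K₁ * (S * X))) = (Q₁ * (Sᴴ * K₁ * S)) * X := by
          simp only [Matrix.mul_assoc]
      _ = X - Q₁ * X := by rw [hq₁, Matrix.sub_mul, Matrix.one_mul]
  have r₂ : ∀ {k : ℕ} (X : Matrix (Fin N) (Fin k) ℂ),
      Q₂ * (Sᴴ * (K₂ * (S * X))) = X - Q₂ * X := by
    intro k X
    calc Q₂ * (Sᴴ * (K₂ * (S * X))) = (Q₂ * (Sᴴ * K₂ * S)) * X := by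
          simp only [Matrix.mul_assoc]
      _ = X - Q₂ * X := by rw [hq₂, Matrix.sub_mul, Matrix.one_mul]
  have r₁' : ∀ {k : ℕ} (X : Matrix (Fin N) (Fin k) ℂ),
      Sᴴ * (K₁ * (S * (Q₁ * X))) = X - Q₁ * X := by
    intro k X
    calc Sᴴ * (K₁ * (S * (Q₁ * X))) = ((Sᴴ * K₁ * S) * Q₁) * X := by
          simp only [Matrix.mul_assoc]
      _ = X - Q₁ * X := by rw [hq₁', Matrix.sub_mul, Matrix.one_mul]
  have r₂' : ∀ {k : ℕ} (X : Matrix (Fin N) (Fin k) ℂ),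
      Sᴴ * (K₂ * (S * (Q₂ * X))) = X - Q₂ * X := by
    intro k X
    calc Sᴴ * (K₂ * (S * (Q₂ * X))) = ((Sᴴ * K₂ * S) * Q₂) * X := by
          simp only [Matrix.mul_assoc]
      _ = X - Q₂ * X := by rw [hq₂', Matrix.sub_mul, Matrix.one_mul]
  -- the key algebraic identity
  have key : (K₂ - K₂ * S * Q₂ * Sᴴ * K₂) - (K₁ - K₁ * S * Q₁ * Sᴴ * K₁) =
      (1 - S * Q₂ * Sᴴ * K₂)ᴴ * (K₂ - K₁) * (1 - S * Q₂ * Sᴴ * K₂) +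
      (Q₁ * Sᴴ * K₁ - Q₂ * Sᴴ * K₂)ᴴ * P₁ * (Q₁ * Sᴴ * K₁ - Q₂ * Sᴴ * K₂) := by
    have hA : (1 - S * Q₂ * Sᴴ * K₂)ᴴ = 1 - K₂ * S * Q₂ * Sᴴ := by
      simp [Matrix.conjTranspose_sub, Matrix.conjTranspose_mul, hH₂, hQH₂, Matrix.mul_assoc]
    have hB : (Q₁ * Sᴴ * K₁ - Q₂ * Sᴴ * K₂)ᴴ = K₁ * S * Q₁ - K₂ * S * Q₂ := by
      simp [Matrix.conjTranspose_sub, Matrix.conjTranspose_mul, hH₁, hH₂, hQH₁, hQH₂,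
        Matrix.mul_assoc]
    rw [hA, hB, hP₁def]
    simp only [Matrix.mul_sub, Matrix.sub_mul, Matrix.mul_add, Matrix.add_mul,
      Matrix.mul_one, Matrix.one_mul, Matrix.mul_assoc, r₁, r₂, r₁', r₂']
    abel
  rw [key]
  exact Matrix.PosSemidef.add (h12.conjTranspose_mul_mul_same _)
    (hP₁.posSemidef.conjTranspose_mul_mul_same _)
end

section
/- Let ρ ≥ 0 be a real number and H an N×M complex matrix, and set K_p := I_M − ρ H† (I_N + ρ H H†)^{-1} H. Then ρ H K_p H† ⪯ I_N; that is, the received covariance of the private signal is at or below the noise floor. -/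
open scoped ComplexOrder Matrix

/-- For `ρ ≥ 0`, an N×M complex matrix `H`, and
`K_p = I - ρ Hᴴ (I + ρ H Hᴴ)⁻¹ H`, we have `ρ H K_p Hᴴ ⪯ I`:
the received covariance of the private signal is at or below the noise floor. -/
theorem private_signal_below_noise {M N : ℕ} (ρ : ℝ) (hρ : 0 ≤ ρ)
    (H : Matrix (Fin N) (Fin M) ℂ) :
    ((1 : Matrix (Fin N) (Fin N) ℂ) -
        (ρ : ℂ) • (H *
          ((1 : Matrix (Fin M) (Fin M) ℂ) -
            (ρ : ℂ) • (Hᴴ * ((1 : Matrix (Fin N) (Fin N) ℂ) + (ρ : ℂ) • (H * Hᴴ))⁻¹ * H)) *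
          Hᴴ)).PosSemidef := by
  set A : Matrix (Fin N) (Fin N) ℂ := H * Hᴴ with hA
  set S : Matrix (Fin N) (Fin N) ℂ := 1 + (ρ : ℂ) • A with hSdef
  -- ρ • A is PSD via the square-root trick
  have hsq : ((Real.sqrt ρ : ℂ) • H) * ((Real.sqrt ρ : ℂ) • H)ᴴ = (ρ : ℂ) • A := by
    rw [Matrix.conjTranspose_smul, Matrix.smul_mul, Matrix.mul_smul, smul_smul]
    congr 1
    rw [Complex.star_def, Complex.conj_ofReal, ← Complex.ofReal_mul,
      Real.mul_self_sqrt hρ]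
  have hρA : ((ρ : ℂ) • A).PosSemidef := by
    rw [← hsq]; exact Matrix.posSemidef_self_mul_conjTranspose _
  have hS : S.PosDef := Matrix.PosDef.add_posSemidef Matrix.PosDef.one hρA
  have hdet : IsUnit S.det := (Matrix.isUnit_iff_isUnit_det S).1 hS.isUnit
  have hSinv : S⁻¹ * S = 1 := Matrix.nonsing_inv_mul S hdet
  have hSinv' : S * S⁻¹ = 1 := Matrix.mul_nonsing_inv S hdet
  -- A commutes with S
  have hAS : A * S = S * A := by
    rw [hSdef, Matrix.mul_add, Matrix.add_mul, Matrix.mul_one, Matrix.one_mul,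
      Matrix.mul_smul, Matrix.smul_mul]
  -- the expression equals S⁻¹
  have key : (1 : Matrix (Fin N) (Fin N) ℂ) -
        (ρ : ℂ) • (H *
          ((1 : Matrix (Fin M) (Fin M) ℂ) - (ρ : ℂ) • (Hᴴ * S⁻¹ * H)) * Hᴴ) = S⁻¹ := by
    have expand : (1 : Matrix (Fin N) (Fin N) ℂ) -
        (ρ : ℂ) • (H * ((1 : Matrix (Fin M) (Fin M) ℂ) - (ρ : ℂ) • (Hᴴ * S⁻¹ * H)) * Hᴴ)
        = 1 - (ρ : ℂ) • A + ((ρ : ℂ) * ρ) • (A * S⁻¹ * A) := by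
      rw [Matrix.mul_sub, Matrix.sub_mul, Matrix.mul_one, Matrix.mul_smul,
        Matrix.smul_mul, smul_sub, smul_smul]
      rw [hA]
      simp only [Matrix.mul_assoc]
      abel
    rw [expand]
    symm
    apply Matrix.inv_eq_left_inv
    have h1 : A * S⁻¹ * A * S = A * A := by
      rw [Matrix.mul_assoc (A * S⁻¹), hAS, ← Matrix.mul_assoc (A * S⁻¹),
        Matrix.mul_assoc A, hSinv, Matrix.mul_one]
    rw [Matrix.add_mul, Matrix.sub_mul, Matrix.one_mul, Matrix.smul_mul, Matrix.smul_mul, h1,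
      hAS, hSdef]
    rw [Matrix.add_mul, Matrix.one_mul, Matrix.smul_mul, smul_add, smul_smul]
    abel
  rw [key]
  exact hS.inv.posSemidef
end

section
/- Let Q₀ be an M×M complex matrix, Q an M×P complex matrix, and S an M×N complex matrix. Set W := Q₀ − Q Q† and suppose I_N + S† W S is invertible. Then Q₀ − [Q₀ S, Q] · [[I_N + S† Q₀ S, S† Q], [Q† S, I_P]]^{-1} · [S† Q₀; Q†] = W − W S (I_N + S† W S)^{-1} S† W, where [Q₀ S, Q] is the M×(N+P) matrix with blocks Q₀S and Q, and [S† Q₀; Q†] is its conjugate-transpose-style counterpart (the (N+P)×M matrix with blocks S†Q₀ and Q†). -/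
open scoped ComplexOrder Matrix

/-! Since the bottom-right block is the identity, the block inverse is governed by the Schur
complement `1 + Sᴴ Q₀ S - Sᴴ Q Qᴴ S = 1 + Sᴴ W S`. Expanding the sandwich, the `Q Qᴴ` term
coming from the identity block combines with `Q₀` into `W`, and the outer factors become
`W S` and `Sᴴ W`. -/

namespace Matrix

variable {l m n α : Type*} [Fintype m] [Fintype n] [DecidableEq m] [DecidableEq n] [CommRing α]

theorem inv_fromBlocks_one₂₂_of_isUnit (A : Matrix m m α) (B : Matrix m n α)
    (C : Matrix n m α) (h : IsUnit (A - B * C)) :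
    (fromBlocks A B C 1)⁻¹ =
      fromBlocks (A - B * C)⁻¹ (-((A - B * C)⁻¹ * B)) (-(C * (A - B * C)⁻¹))
        (1 + C * (A - B * C)⁻¹ * B) := by
  let : Invertible (1 : Matrix n n α) := invertibleOne
  let : Invertible (A - B * ⅟(1 : Matrix n n α) * C) := by
    rw [invOf_one, Matrix.mul_one]; exact h.invertible
  let := fromBlocks₂₂Invertible A B C 1
  rw [← invOf_eq_nonsing_inv, invOf_fromBlocks₂₂_eq]
  simp only [invOf_one, Matrix.mul_one, Matrix.one_mul, invOf_eq_nonsing_inv]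

theorem fromCols_mul_inv_fromBlocks_one₂₂_mul_fromRows (X : Matrix l m α) (Y : Matrix l n α)
    (A : Matrix m m α) (B : Matrix m n α) (C : Matrix n m α) (U : Matrix m l α)
    (V : Matrix n l α) (h : IsUnit (A - B * C)) :
    fromCols X Y * (fromBlocks A B C 1)⁻¹ * fromRows U V =
      Y * V + (X - Y * C) * (A - B * C)⁻¹ * (U - B * V) := by
  rw [inv_fromBlocks_one₂₂_of_isUnit A B C h, fromCols_mul_fromBlocks, fromCols_mul_fromRows]
  simp only [Matrix.mul_neg, Matrix.neg_mul, Matrix.mul_sub, Matrix.sub_mul, Matrix.mul_add,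
    Matrix.add_mul, Matrix.mul_one, Matrix.mul_assoc]
  abel

end Matrix

/-- Schur-complement reduction: with `W = Q₀ - Q Qᴴ` and `I + Sᴴ W S` invertible,
`Q₀ - [Q₀S, Q] [[I + Sᴴ Q₀ S, Sᴴ Q], [Qᴴ S, I]]⁻¹ [Sᴴ Q₀; Qᴴ]
  = W - W S (I + Sᴴ W S)⁻¹ Sᴴ W`. -/
theorem schur_reduction {M N P : ℕ} (Q₀ : Matrix (Fin M) (Fin M) ℂ)
    (Q : Matrix (Fin M) (Fin P) ℂ) (S : Matrix (Fin M) (Fin N) ℂ)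
    (hW : IsUnit ((1 : Matrix (Fin N) (Fin N) ℂ) + Sᴴ * (Q₀ - Q * Qᴴ) * S)) :
    Q₀ - Matrix.fromCols (Q₀ * S) Q *
        (Matrix.fromBlocks ((1 : Matrix (Fin N) (Fin N) ℂ) + Sᴴ * Q₀ * S) (Sᴴ * Q)
          (Qᴴ * S) (1 : Matrix (Fin P) (Fin P) ℂ))⁻¹ *
        Matrix.fromRows (Sᴴ * Q₀) Qᴴ
      = (Q₀ - Q * Qᴴ) -
        (Q₀ - Q * Qᴴ) * S * ((1 : Matrix (Fin N) (Fin N) ℂ) + Sᴴ * (Q₀ - Q * Qᴴ) * S)⁻¹ *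
          Sᴴ * (Q₀ - Q * Qᴴ) := by
  have hSchur : 1 + Sᴴ * Q₀ * S - Sᴴ * Q * (Qᴴ * S) = 1 + Sᴴ * (Q₀ - Q * Qᴴ) * S := by
    simp only [Matrix.mul_sub, Matrix.sub_mul, Matrix.mul_assoc]; abel
  have hLeft : Q₀ * S - Q * (Qᴴ * S) = (Q₀ - Q * Qᴴ) * S := by
    rw [Matrix.sub_mul, Matrix.mul_assoc]
  have hRight : Sᴴ * Q₀ - Sᴴ * Q * Qᴴ = Sᴴ * (Q₀ - Q * Qᴴ) := by
    rw [Matrix.mul_sub, Matrix.mul_assoc]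
  rw [Matrix.fromCols_mul_inv_fromBlocks_one₂₂_mul_fromRows _ _ _ _ _ _ _ (hSchur ▸ hW),
    hSchur, hLeft, hRight]
  simp only [Matrix.mul_assoc]
  abel
end

section
/- Let ρ₁, ρ₂ ≥ 0 be real numbers, H₁ an N₁×M₁ complex matrix, H₂ an N₂×M₁ complex matrix, and Q an M₁×M₂ complex matrix with Q Q† ⪯ I_{M₁}. Then I_{N₁} + ρ₁ H₁ H₁† − [√(ρ₁ρ₂) H₁ H₂†, √ρ₁ H₁ Q] · [[I_{N₂} + ρ₂ H₂ H₂†, √ρ₂ H₂ Q], [√ρ₂ Q† H₂†, I_{M₂}]]^{-1} · [√(ρ₁ρ₂) H₂ H₁†; √ρ₁ Q† H₁†] ⪯ I_{N₁} + ρ₁ H₁ H₁† − ρ₁ ρ₂ H₁ H₂† (I_{N₂} + ρ₂ H₂ H₂†)^{-1} H₂ H₁†. (The inner 2×2 block matrix is positive definite, hence invertible, and I_{N₂} + ρ₂ H₂ H₂† is positive definite, hence invertible.) -/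
/-!
Let `X = [√(ρ₁ρ₂) H₁H₂ᴴ, √ρ₁ H₁Q]` be the off-diagonal block, `B` the inner block matrix and
`J = [I; 0]` the inclusion of the first block coordinate. Then `JᴴBJ = I + ρ₂H₂H₂ᴴ` and
`XJ = √(ρ₁ρ₂) H₁H₂ᴴ`, so the difference of the two sides is `X (B⁻¹ - J (JᴴBJ)⁻¹ Jᴴ) Xᴴ`.
For any positive definite `B`, the Hermitian matrix `R = B⁻¹ - J (JᴴBJ)⁻¹ Jᴴ` satisfies
`R B R = R`, hence is positive semidefinite. The hypothesis `QQᴴ ⪯ I` is what makes `B` positive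
definite: its Schur complement is `I + ρ₂ H₂ (I - QQᴴ) H₂ᴴ`.
-/

open scoped ComplexOrder Matrix
open Matrix

namespace Matrix

variable {m n 𝕜 : Type*} [Fintype m] [DecidableEq m] [Fintype n] [DecidableEq n] [RCLike 𝕜]

theorem posDef_fromBlocks₂₂ {A : Matrix m m 𝕜} {B : Matrix m n 𝕜} {D : Matrix n n 𝕜}
    (hD : D.PosDef) (hS : (A - B * D⁻¹ * Bᴴ).PosDef) : (fromBlocks A B Bᴴ D).PosDef := by
  have := hD.isUnit.invertible
  refine ((PosDef.fromBlocks₂₂ A B hD).mpr hS.posSemidef).posDef_iff_isUnit.mpr ?_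
  rw [isUnit_iff_isUnit_det, det_fromBlocks₂₂, invOf_eq_nonsing_inv]
  exact (isUnit_iff_isUnit_det _ |>.mp hD.isUnit).mul (isUnit_iff_isUnit_det _ |>.mp hS.isUnit)

theorem PosDef.posSemidef_inv_sub_mul_inv_mul {B : Matrix m m 𝕜} (hB : B.PosDef)
    (J : Matrix m n 𝕜) : (B⁻¹ - J * (Jᴴ * B * J)⁻¹ * Jᴴ).PosSemidef := by
  set M := Jᴴ * B * J
  by_cases hM : IsUnit M.det
  swap
  · simpa [nonsing_inv_apply_not_isUnit _ hM] using hB.inv.posSemidef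
  set R := B⁻¹ - J * M⁻¹ * Jᴴ
  have hR : Rᴴ = R := by
    have hMh : Mᴴ = M := by simp [M, hB.1.eq, Matrix.mul_assoc]
    simp [R, conjTranspose_nonsing_inv, hB.1.eq, hMh, Matrix.mul_assoc]
  have hBdet : IsUnit B.det := (isUnit_iff_isUnit_det _).mp hB.isUnit
  have hJBR : Jᴴ * B * R = 0 := by
    rw [Matrix.mul_sub, mul_nonsing_inv_cancel_right _ _ hBdet, ← Matrix.mul_assoc,
      ← Matrix.mul_assoc, mul_nonsing_inv _ hM, Matrix.one_mul, sub_self]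
  have hRBR : R * B * R = R := by
    calc R * B * R = (1 - J * M⁻¹ * Jᴴ * B) * R := by
          rw [Matrix.sub_mul, nonsing_inv_mul _ hBdet]
      _ = R := by
          simp only [Matrix.sub_mul, Matrix.one_mul, Matrix.mul_assoc] at hJBR ⊢
          rw [hJBR, Matrix.mul_zero, Matrix.mul_zero, sub_zero]
  rw [← hRBR]
  nth_rewrite 2 [← hR]
  exact hB.posSemidef.mul_mul_conjTranspose_same R

theorem posDef_fromBlocks_one_add_smul_of_posSemidef_one_sub {k : Type*} [Fintype k]
    [DecidableEq k] {ρ : ℝ} (hρ : 0 ≤ ρ) (H : Matrix n m ℂ) (Q : Matrix m k ℂ)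
    (hQ : (1 - Q * Qᴴ).PosSemidef) :
    (fromBlocks (1 + (ρ : ℂ) • (H * Hᴴ)) ((√ρ : ℂ) • (H * Q)) ((√ρ : ℂ) • (Qᴴ * Hᴴ))
      1).PosDef := by
  have hsq : (√ρ : ℂ) * √ρ = ρ := by exact_mod_cast Real.mul_self_sqrt hρ
  have hY : (√ρ : ℂ) • (Qᴴ * Hᴴ) = ((√ρ : ℂ) • (H * Q))ᴴ := by simp
  rw [hY]
  refine posDef_fromBlocks₂₂ PosDef.one ?_
  have hS : 1 + (ρ : ℂ) • (H * Hᴴ) -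
        (√ρ : ℂ) • (H * Q) * (1 : Matrix k k ℂ)⁻¹ * ((√ρ : ℂ) • (H * Q))ᴴ =
      1 + (ρ : ℂ) • (H * (1 - Q * Qᴴ) * Hᴴ) := by
    simp only [inv_one, Matrix.mul_one, conjTranspose_smul, conjTranspose_mul, RCLike.star_def,
      Complex.conj_ofReal, Matrix.smul_mul, Matrix.mul_smul, smul_smul, hsq, Matrix.mul_sub,
      Matrix.sub_mul, smul_sub, Matrix.mul_assoc]
    abel
  rw [hS]
  exact PosDef.one.add_posSemidef
    ((hQ.mul_mul_conjTranspose_same H).smul (Complex.zero_le_real.mpr hρ))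

end Matrix

/-- For `ρ₁, ρ₂ ≥ 0`, `H₁ : N₁×M₁`, `H₂ : N₂×M₁`, and `Q : M₁×M₂` with `Q Qᴴ ⪯ I`,
the Schur complement with correlation `Q` is dominated (in the Loewner order) by the one
with `Q = 0`:
`I + ρ₁H₁H₁ᴴ - [√(ρ₁ρ₂)H₁H₂ᴴ, √ρ₁H₁Q] B⁻¹ [√(ρ₁ρ₂)H₂H₁ᴴ; √ρ₁QᴴH₁ᴴ]
   ⪯ I + ρ₁H₁H₁ᴴ - ρ₁ρ₂ H₁H₂ᴴ (I + ρ₂H₂H₂ᴴ)⁻¹ H₂H₁ᴴ`,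
where `B = [[I + ρ₂H₂H₂ᴴ, √ρ₂H₂Q], [√ρ₂QᴴH₂ᴴ, I]]`. -/
theorem schur_complement_loewner_le {M₁ M₂ N₁ N₂ : ℕ} (ρ₁ ρ₂ : ℝ) (hρ₁ : 0 ≤ ρ₁) (hρ₂ : 0 ≤ ρ₂)
    (H₁ : Matrix (Fin N₁) (Fin M₁) ℂ) (H₂ : Matrix (Fin N₂) (Fin M₁) ℂ)
    (Q : Matrix (Fin M₁) (Fin M₂) ℂ)
    (hQ : ((1 : Matrix (Fin M₁) (Fin M₁) ℂ) - Q * Qᴴ).PosSemidef) :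
    (((1 : Matrix (Fin N₁) (Fin N₁) ℂ) + (ρ₁ : ℂ) • (H₁ * H₁ᴴ) -
        (ρ₁ * ρ₂ : ℝ) •
          (H₁ * H₂ᴴ * ((1 : Matrix (Fin N₂) (Fin N₂) ℂ) + (ρ₂ : ℂ) • (H₂ * H₂ᴴ))⁻¹ *
            (H₂ * H₁ᴴ))) -
      ((1 : Matrix (Fin N₁) (Fin N₁) ℂ) + (ρ₁ : ℂ) • (H₁ * H₁ᴴ) -
        Matrix.fromCols ((Real.sqrt (ρ₁ * ρ₂) : ℂ) • (H₁ * H₂ᴴ))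
            ((Real.sqrt ρ₁ : ℂ) • (H₁ * Q)) *
          (Matrix.fromBlocks ((1 : Matrix (Fin N₂) (Fin N₂) ℂ) + (ρ₂ : ℂ) • (H₂ * H₂ᴴ))
            ((Real.sqrt ρ₂ : ℂ) • (H₂ * Q)) ((Real.sqrt ρ₂ : ℂ) • (Qᴴ * H₂ᴴ))
            (1 : Matrix (Fin M₂) (Fin M₂) ℂ))⁻¹ *
          Matrix.fromRows ((Real.sqrt (ρ₁ * ρ₂) : ℂ) • (H₂ * H₁ᴴ))
            ((Real.sqrt ρ₁ : ℂ) • (Qᴴ * H₁ᴴ)))).PosSemidef := by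
  set A := (1 : Matrix (Fin N₂) (Fin N₂) ℂ) + (ρ₂ : ℂ) • (H₂ * H₂ᴴ)
  set B := fromBlocks A ((√ρ₂ : ℂ) • (H₂ * Q)) ((√ρ₂ : ℂ) • (Qᴴ * H₂ᴴ)) 1
  set X := fromCols ((√(ρ₁ * ρ₂) : ℂ) • (H₁ * H₂ᴴ)) ((√ρ₁ : ℂ) • (H₁ * Q))
  set J : Matrix (Fin N₂ ⊕ Fin M₂) (Fin N₂) ℂ := fromRows 1 0
  have hB : B.PosDef := posDef_fromBlocks_one_add_smul_of_posSemidef_one_sub hρ₂ H₂ Q hQ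
  have hrows : fromRows ((√(ρ₁ * ρ₂) : ℂ) • (H₂ * H₁ᴴ)) ((√ρ₁ : ℂ) • (Qᴴ * H₁ᴴ)) = Xᴴ := by
    simp [X, conjTranspose_fromCols_eq_fromRows_conjTranspose]
  have hJBJ : Jᴴ * B * J = A := by
    simp [J, B, conjTranspose_fromRows_eq_fromCols_conjTranspose, fromCols_mul_fromBlocks,
      fromCols_mul_fromRows]
  have hXJ : X * J = (√(ρ₁ * ρ₂) : ℂ) • (H₁ * H₂ᴴ) := by
    simp [X, J, fromCols_mul_fromRows]
  have hcorr : (ρ₁ * ρ₂ : ℝ) • (H₁ * H₂ᴴ * A⁻¹ * (H₂ * H₁ᴴ)) =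
      X * J * (Jᴴ * B * J)⁻¹ * (X * J)ᴴ := by
    rw [hJBJ, hXJ]
    simp [smul_smul, Real.mul_self_sqrt (mul_nonneg hρ₁ hρ₂), Matrix.mul_assoc]
  rw [hrows, hcorr, sub_sub_sub_cancel_left, conjTranspose_mul]
  have hdiff := (hB.posSemidef_inv_sub_mul_inv_mul J).mul_mul_conjTranspose_same X
  rw [Matrix.mul_sub, Matrix.sub_mul] at hdiff
  simpa only [Matrix.mul_assoc] using hdiff
end

section
/- Let ρ₁, ρ₂ ≥ 0 be real numbers, H₁ an N×M₁ complex matrix, H₂ an N×M₂ complex matrix, and Q an M₁×M₂ complex matrix with Q Q† ⪯ I_{M₁}. Then √(ρ₁ρ₂) (H₁ Q H₂† + H₂ Q† H₁†) ⪯ ρ₁ H₁ H₁† + ρ₂ H₂ H₂†. -/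
open scoped ComplexOrder Matrix

/-- For `ρ₁, ρ₂ ≥ 0`, `H₁ : N×M₁`, `H₂ : N×M₂`, and `Q : M₁×M₂` with `Q Qᴴ ⪯ I`:
`√(ρ₁ρ₂) (H₁ Q H₂ᴴ + H₂ Qᴴ H₁ᴴ) ⪯ ρ₁ H₁ H₁ᴴ + ρ₂ H₂ H₂ᴴ`. -/
theorem cross_term_dominated {M₁ M₂ N : ℕ} (ρ₁ ρ₂ : ℝ) (hρ₁ : 0 ≤ ρ₁) (hρ₂ : 0 ≤ ρ₂)
    (H₁ : Matrix (Fin N) (Fin M₁) ℂ) (H₂ : Matrix (Fin N) (Fin M₂) ℂ)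
    (Q : Matrix (Fin M₁) (Fin M₂) ℂ)
    (hQ : ((1 : Matrix (Fin M₁) (Fin M₁) ℂ) - Q * Qᴴ).PosSemidef) :
    ((ρ₁ : ℂ) • (H₁ * H₁ᴴ) + (ρ₂ : ℂ) • (H₂ * H₂ᴴ) -
      (Real.sqrt (ρ₁ * ρ₂) : ℂ) • (H₁ * Q * H₂ᴴ + H₂ * Qᴴ * H₁ᴴ)).PosSemidef := by
  set A : Matrix (Fin N) (Fin M₁) ℂ := (Real.sqrt ρ₁ : ℂ) • H₁ with hA
  set B : Matrix (Fin N) (Fin M₂) ℂ := (Real.sqrt ρ₂ : ℂ) • H₂ with hB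
  have key : (ρ₁ : ℂ) • (H₁ * H₁ᴴ) + (ρ₂ : ℂ) • (H₂ * H₂ᴴ) -
      (Real.sqrt (ρ₁ * ρ₂) : ℂ) • (H₁ * Q * H₂ᴴ + H₂ * Qᴴ * H₁ᴴ) =
      (A * Q - B) * (A * Q - B)ᴴ + A * (1 - Q * Qᴴ) * Aᴴ := by
    have h1 : ((Real.sqrt ρ₁ : ℂ)) * (Real.sqrt ρ₁ : ℂ) = (ρ₁ : ℂ) := by
      rw [← Complex.ofReal_mul, Real.mul_self_sqrt hρ₁]
    have h2 : ((Real.sqrt ρ₂ : ℂ)) * (Real.sqrt ρ₂ : ℂ) = (ρ₂ : ℂ) := by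
      rw [← Complex.ofReal_mul, Real.mul_self_sqrt hρ₂]
    have h12 : (Real.sqrt (ρ₁ * ρ₂) : ℂ) = (Real.sqrt ρ₁ : ℂ) * (Real.sqrt ρ₂ : ℂ) := by
      rw [← Complex.ofReal_mul, Real.sqrt_mul hρ₁]
    have hs1 : star ((Real.sqrt ρ₁ : ℂ)) = (Real.sqrt ρ₁ : ℂ) := by
      simp [Complex.star_def, Complex.conj_ofReal]
    have hs2 : star ((Real.sqrt ρ₂ : ℂ)) = (Real.sqrt ρ₂ : ℂ) := by
      simp [Complex.star_def, Complex.conj_ofReal]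
    rw [hA, hB]
    simp only [Matrix.conjTranspose_sub, Matrix.conjTranspose_smul, Matrix.conjTranspose_mul,
      hs1, hs2, Matrix.smul_mul, Matrix.mul_smul, Matrix.sub_mul, Matrix.mul_sub,
      Matrix.mul_one, smul_smul, h1, h2, h12, Matrix.mul_assoc]
    simp only [smul_add, smul_smul, neg_smul, one_smul, mul_comm ((Real.sqrt ρ₂ : ℂ)), h1, h2]
    match_scalars <;> simp [pow_two, ← h1, ← h2] <;> ring
  rw [key]
  exact (Matrix.posSemidef_self_mul_conjTranspose _).add (hQ.mul_mul_conjTranspose_same A)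
end

section
/- Let ρ₁, ρ₂ ≥ 0 be real numbers, H₁ an N×M₁ complex matrix, H₂ an N×M₂ complex matrix, and Q an M₁×M₂ complex matrix with Q Q† ⪯ I_{M₁}. Then det(I_N + ρ₁ H₁ H₁† + ρ₂ H₂ H₂† + √(ρ₁ρ₂) H₁ Q H₂† + √(ρ₁ρ₂) H₂ Q† H₁†) ≤ 2^N · det(I_N + ρ₁ H₁ H₁† + ρ₂ H₂ H₂†), where both determinants are those of Hermitian positive definite matrices and hence are positive real numbers. -/
open scoped ComplexOrder Matrix

/-!
Write `X = √ρ₁ H₁` and `Y = √ρ₂ H₂`, so that the two matrices are `I + P₊` and `I + X Xᴴ + Y Yᴴ`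
with `P₊ = X Xᴴ + Y Yᴴ + X Q Yᴴ + Y Qᴴ Xᴴ`. Completing the square,
`P₊ = X (I - Q Qᴴ) Xᴴ + (X Q + Y)(X Q + Y)ᴴ ⪰ 0`, and the same identity with `-Y` in place of `Y`
shows `2 (I + X Xᴴ + Y Yᴴ) - (I + P₊) ⪰ I`. Hence `I + P₊ ⪯ 2 (I + X Xᴴ + Y Yᴴ)`, and the
determinant is monotone for the Loewner order on positive semidefinite matrices.
-/

namespace Matrix

section DetMono

open scoped MatrixOrder

variable {n 𝕜 : Type*} [Fintype n] [DecidableEq n] [RCLike 𝕜]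

theorem det_le_one_of_nonneg_of_le_one {A : Matrix n n 𝕜} (h₀ : 0 ≤ A) (h₁ : A ≤ 1) :
    A.det ≤ 1 := by
  have hA := nonneg_iff_posSemidef.mp h₀
  rw [hA.isHermitian.det_eq_prod_eigenvalues, ← RCLike.ofReal_prod, ← RCLike.ofReal_one,
    RCLike.ofReal_le_ofReal]
  exact Finset.prod_le_one (fun i _ => hA.eigenvalues_nonneg i)
    fun i _ => (CFC.le_one_iff A).mp h₁ _ (hA.isHermitian.eigenvalues_mem_spectrum_real i)

/-- Conjugating by `B^{-1/2}` reduces this to the case `B = 1`. -/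
theorem det_le_det_of_le {A B : Matrix n n 𝕜} (hA : 0 ≤ A) (hB : B.PosDef) (hAB : A ≤ B) :
    A.det ≤ B.det := by
  set R := CFC.sqrt B
  have hR : R⁻¹.IsHermitian := (nonneg_iff_posSemidef.mp (CFC.sqrt_nonneg B)).isHermitian.inv
  have hRR : R * R = B := CFC.sqrt_mul_sqrt_self B hB.posSemidef.nonneg
  have hRunit : IsUnit R.det := by
    rw [isUnit_iff_ne_zero]
    intro h
    exact hB.det_pos.ne' (by rw [← hRR, det_mul, h, zero_mul])
  set M := R⁻¹ * A * R⁻¹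
  have hA_eq : A = R * M * R := by
    simp only [M, ← Matrix.mul_assoc, mul_nonsing_inv _ hRunit, one_mul]
    rw [Matrix.mul_assoc, nonsing_inv_mul _ hRunit, mul_one]
  have hM₀ : 0 ≤ M := by
    have h := star_left_conjugate_nonneg hA R⁻¹
    rwa [star_eq_conjTranspose, hR.eq] at h
  have hM₁ : M ≤ 1 := by
    have hB₁ : R⁻¹ * B * R⁻¹ = 1 := by
      rw [← hRR, ← Matrix.mul_assoc, nonsing_inv_mul _ hRunit, one_mul, mul_nonsing_inv _ hRunit]
    have h := star_left_conjugate_le_conjugate hAB R⁻¹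
    rwa [star_eq_conjTranspose, hR.eq, hB₁] at h
  calc A.det = M.det * B.det := by rw [hA_eq, ← hRR]; simp only [det_mul]; ring
    _ ≤ 1 * B.det := mul_le_mul_of_nonneg_right (det_le_one_of_nonneg_of_le_one hM₀ hM₁)
        hB.posSemidef.det_nonneg
    _ = B.det := one_mul _

end DetMono

section Cross

variable {n m₁ m₂ 𝕜 : Type*} [Fintype m₁] [Fintype m₂] [RCLike 𝕜]

theorem mul_conjTranspose_add_cross_eq [DecidableEq m₁] (X : Matrix n m₁ 𝕜) (Y : Matrix n m₂ 𝕜)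
    (Q : Matrix m₁ m₂ 𝕜) :
    X * (1 - Q * Qᴴ) * Xᴴ + (X * Q + Y) * (X * Q + Y)ᴴ =
      X * Xᴴ + Y * Yᴴ + X * Q * Yᴴ + Y * Qᴴ * Xᴴ := by
  simp only [conjTranspose_add, conjTranspose_mul, Matrix.mul_sub, Matrix.sub_mul,
    Matrix.add_mul, Matrix.mul_add, Matrix.mul_one, Matrix.mul_assoc]
  abel

theorem posSemidef_mul_conjTranspose_add_cross [Fintype n] [DecidableEq m₁] {Q : Matrix m₁ m₂ 𝕜}
    (hQ : (1 - Q * Qᴴ).PosSemidef) (X : Matrix n m₁ 𝕜) (Y : Matrix n m₂ 𝕜) :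
    (X * Xᴴ + Y * Yᴴ + X * Q * Yᴴ + Y * Qᴴ * Xᴴ).PosSemidef :=
  mul_conjTranspose_add_cross_eq X Y Q ▸
    (hQ.mul_mul_conjTranspose_same X).add (posSemidef_self_mul_conjTranspose _)

variable [Fintype n] [DecidableEq n]

theorem posDef_one_add_mul_conjTranspose_add (X : Matrix n m₁ 𝕜) (Y : Matrix n m₂ 𝕜) :
    (1 + X * Xᴴ + Y * Yᴴ).PosDef := by
  simpa only [add_assoc] using PosDef.one.add_posSemidef
    ((posSemidef_self_mul_conjTranspose X).add (posSemidef_self_mul_conjTranspose Y))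

variable [DecidableEq m₁] {Q : Matrix m₁ m₂ 𝕜}

theorem posDef_one_add_mul_conjTranspose_add_cross (hQ : (1 - Q * Qᴴ).PosSemidef)
    (X : Matrix n m₁ 𝕜) (Y : Matrix n m₂ 𝕜) :
    (1 + X * Xᴴ + Y * Yᴴ + X * Q * Yᴴ + Y * Qᴴ * Xᴴ).PosDef := by
  simpa only [add_assoc] using
    PosDef.one.add_posSemidef (posSemidef_mul_conjTranspose_add_cross hQ X Y)

open scoped MatrixOrder in
theorem det_one_add_mul_conjTranspose_add_cross_le (hQ : (1 - Q * Qᴴ).PosSemidef)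
    (X : Matrix n m₁ 𝕜) (Y : Matrix n m₂ 𝕜) :
    (1 + X * Xᴴ + Y * Yᴴ + X * Q * Yᴴ + Y * Qᴴ * Xᴴ).det ≤
      2 ^ Fintype.card n * (1 + X * Xᴴ + Y * Yᴴ).det := by
  have hgap : (2 : 𝕜) • (1 + X * Xᴴ + Y * Yᴴ) - (1 + X * Xᴴ + Y * Yᴴ + X * Q * Yᴴ + Y * Qᴴ * Xᴴ)
      = 1 + (X * Xᴴ + (-Y) * (-Y)ᴴ + X * Q * (-Y)ᴴ + (-Y) * Qᴴ * Xᴴ) := by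
    simp only [conjTranspose_neg, Matrix.neg_mul, Matrix.mul_neg, neg_neg, two_smul]
    abel
  have hle : 1 + X * Xᴴ + Y * Yᴴ + X * Q * Yᴴ + Y * Qᴴ * Xᴴ ≤ (2 : 𝕜) • (1 + X * Xᴴ + Y * Yᴴ) :=
    le_iff.mpr (hgap ▸ (PosDef.one.add_posSemidef
      (posSemidef_mul_conjTranspose_add_cross hQ X (-Y))).posSemidef)
  simpa only [det_smul] using det_le_det_of_le
    (posDef_one_add_mul_conjTranspose_add_cross hQ X Y).posSemidef.nonneg
    ((posDef_one_add_mul_conjTranspose_add X Y).smul two_pos) hle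

end Cross

theorem ofReal_smul_mul_conjTranspose_ofReal_smul {n m k : Type*} [Fintype m] (r s : ℝ)
    (X : Matrix n m ℂ) (Y : Matrix k m ℂ) :
    ((r : ℂ) • X) * ((s : ℂ) • Y)ᴴ = ((r * s : ℝ) : ℂ) • (X * Yᴴ) := by
  simp only [conjTranspose_smul, Complex.star_def, Complex.conj_ofReal, Matrix.smul_mul,
    Matrix.mul_smul, smul_smul, Complex.ofReal_mul, mul_comm]

theorem PosDef.exists_det_eq_ofReal {n : Type*} [Fintype n] [DecidableEq n]
    {A : Matrix n n ℂ} (hA : A.PosDef) : ∃ a : ℝ, 0 < a ∧ A.det = a := by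
  obtain ⟨a, ha, h⟩ := RCLike.pos_iff_exists_ofReal.mp hA.det_pos
  exact ⟨a, ha, h.symm⟩

end Matrix

/-- For `ρ₁, ρ₂ ≥ 0`, `H₁ : N×M₁`, `H₂ : N×M₂`, and `Q : M₁×M₂` with `Q Qᴴ ⪯ I`,
both `I + ρ₁H₁H₁ᴴ + ρ₂H₂H₂ᴴ + √(ρ₁ρ₂)H₁QH₂ᴴ + √(ρ₁ρ₂)H₂QᴴH₁ᴴ` and
`I + ρ₁H₁H₁ᴴ + ρ₂H₂H₂ᴴ` are Hermitian positive definite; their determinants are positive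
reals and `det(first) ≤ 2^N · det(second)`. -/
theorem det_correlated_le_pow_two_det {M₁ M₂ N : ℕ} (ρ₁ ρ₂ : ℝ) (hρ₁ : 0 ≤ ρ₁) (hρ₂ : 0 ≤ ρ₂)
    (H₁ : Matrix (Fin N) (Fin M₁) ℂ) (H₂ : Matrix (Fin N) (Fin M₂) ℂ)
    (Q : Matrix (Fin M₁) (Fin M₂) ℂ)
    (hQ : ((1 : Matrix (Fin M₁) (Fin M₁) ℂ) - Q * Qᴴ).PosSemidef) :
    ((1 : Matrix (Fin N) (Fin N) ℂ) + (ρ₁ : ℂ) • (H₁ * H₁ᴴ) + (ρ₂ : ℂ) • (H₂ * H₂ᴴ) +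
        (Real.sqrt (ρ₁ * ρ₂) : ℂ) • (H₁ * Q * H₂ᴴ) +
        (Real.sqrt (ρ₁ * ρ₂) : ℂ) • (H₂ * Qᴴ * H₁ᴴ)).PosDef ∧
    ((1 : Matrix (Fin N) (Fin N) ℂ) + (ρ₁ : ℂ) • (H₁ * H₁ᴴ) + (ρ₂ : ℂ) • (H₂ * H₂ᴴ)).PosDef ∧
    ∃ a b : ℝ, 0 < a ∧ 0 < b ∧
      ((1 : Matrix (Fin N) (Fin N) ℂ) + (ρ₁ : ℂ) • (H₁ * H₁ᴴ) + (ρ₂ : ℂ) • (H₂ * H₂ᴴ) +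
          (Real.sqrt (ρ₁ * ρ₂) : ℂ) • (H₁ * Q * H₂ᴴ) +
          (Real.sqrt (ρ₁ * ρ₂) : ℂ) • (H₂ * Qᴴ * H₁ᴴ)).det = (a : ℂ) ∧
      ((1 : Matrix (Fin N) (Fin N) ℂ) + (ρ₁ : ℂ) • (H₁ * H₁ᴴ) + (ρ₂ : ℂ) • (H₂ * H₂ᴴ)).det
        = (b : ℂ) ∧
      a ≤ 2 ^ N * b := by
  set X := (Real.sqrt ρ₁ : ℂ) • H₁ with hX
  set Y := (Real.sqrt ρ₂ : ℂ) • H₂ with hY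
  have hXX : X * Xᴴ = (ρ₁ : ℂ) • (H₁ * H₁ᴴ) := by
    rw [hX, Matrix.ofReal_smul_mul_conjTranspose_ofReal_smul, Real.mul_self_sqrt hρ₁]
  have hYY : Y * Yᴴ = (ρ₂ : ℂ) • (H₂ * H₂ᴴ) := by
    rw [hY, Matrix.ofReal_smul_mul_conjTranspose_ofReal_smul, Real.mul_self_sqrt hρ₂]
  have hXY : X * Q * Yᴴ = (Real.sqrt (ρ₁ * ρ₂) : ℂ) • (H₁ * Q * H₂ᴴ) := by
    rw [hX, hY, Matrix.smul_mul, Matrix.ofReal_smul_mul_conjTranspose_ofReal_smul,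
      Real.sqrt_mul hρ₁]
  have hYX : Y * Qᴴ * Xᴴ = (Real.sqrt (ρ₁ * ρ₂) : ℂ) • (H₂ * Qᴴ * H₁ᴴ) := by
    rw [hX, hY, Matrix.smul_mul, Matrix.ofReal_smul_mul_conjTranspose_ofReal_smul, mul_comm,
      Real.sqrt_mul hρ₁]
  rw [← hXX, ← hYY, ← hXY, ← hYX]
  have hS := Matrix.posDef_one_add_mul_conjTranspose_add_cross hQ X Y
  have hA := Matrix.posDef_one_add_mul_conjTranspose_add X Y
  obtain ⟨a, ha, ha_eq⟩ := hS.exists_det_eq_ofReal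
  obtain ⟨b, hb, hb_eq⟩ := hA.exists_det_eq_ofReal
  refine ⟨hS, hA, a, b, ha, hb, ha_eq, hb_eq, ?_⟩
  have hdet := Matrix.det_one_add_mul_conjTranspose_add_cross_le hQ X Y
  rw [ha_eq, hb_eq, Fintype.card_fin] at hdet
  exact_mod_cast hdet
end

section
/- Let ρ₁₁, ρ₁₂ ≥ 0 be real numbers, H₁₁ an N₁×M₁ complex matrix, H₁₂ an N₂×M₁ complex matrix, and Q an M₁×M₂ complex matrix with Q Q† ⪯ I_{M₁}. Then det(I_{N₂} + ρ₁₂ H₁₂ H₁₂† − ρ₁₂ H₁₂ Q Q† H₁₂†) · det(I_{N₁} + ρ₁₁ H₁₁ H₁₁† − [√(ρ₁₁ρ₁₂) H₁₁ H₁₂†, √ρ₁₁ H₁₁ Q] · [[I_{N₂} + ρ₁₂ H₁₂ H₁₂†, √ρ₁₂ H₁₂ Q], [√ρ₁₂ Q† H₁₂†, I_{M₂}]]^{-1} · [√(ρ₁₁ρ₁₂) H₁₂ H₁₁†; √ρ₁₁ Q† H₁₁†]) ≤ det(I_{N₂} + ρ₁₂ H₁₂ H₁₂†) · det(I_{N₁}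 + ρ₁₁ H₁₁ H₁₁† − ρ₁₁ ρ₁₂ H₁₁ H₁₂† (I_{N₂} + ρ₁₂ H₁₂ H₁₂†)^{-1} H₁₂ H₁₁†), where all four matrices whose determinants appear are Hermitian positive semidefinite so their determinants are nonnegative reals; the inner 2×2 block matrix and I_{N₂} + ρ₁₂ H₁₂ H₁₂† are positive definite, hence invertible. -/
open scoped ComplexOrder Matrix

/-- `I_{N₂} + ρ₁₂ H₁₂H₁₂ᴴ − ρ₁₂ H₁₂ Q Qᴴ H₁₂ᴴ`. -/
noncomputable def detMat₁ {N₂ M₁ M₂ : ℕ} (ρ₁₂ : ℝ) (H12 : Matrix (Fin N₂) (Fin M₁) ℂ)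
    (Q : Matrix (Fin M₁) (Fin M₂) ℂ) : Matrix (Fin N₂) (Fin N₂) ℂ :=
  (1 : Matrix (Fin N₂) (Fin N₂) ℂ) + (ρ₁₂ : ℂ) • (H12 * H12ᴴ) -
    (ρ₁₂ : ℂ) • (H12 * Q * Qᴴ * H12ᴴ)

/-- The inner 2×2 block matrix `[[I + ρ₁₂H₁₂H₁₂ᴴ, √ρ₁₂H₁₂Q], [√ρ₁₂QᴴH₁₂ᴴ, I]]`. -/
noncomputable def innerBlock {N₂ M₁ M₂ : ℕ} (ρ₁₂ : ℝ) (H12 : Matrix (Fin N₂) (Fin M₁) ℂ)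
    (Q : Matrix (Fin M₁) (Fin M₂) ℂ) :
    Matrix (Fin N₂ ⊕ Fin M₂) (Fin N₂ ⊕ Fin M₂) ℂ :=
  Matrix.fromBlocks ((1 : Matrix (Fin N₂) (Fin N₂) ℂ) + (ρ₁₂ : ℂ) • (H12 * H12ᴴ))
    ((Real.sqrt ρ₁₂ : ℂ) • (H12 * Q)) ((Real.sqrt ρ₁₂ : ℂ) • (Qᴴ * H12ᴴ))
    (1 : Matrix (Fin M₂) (Fin M₂) ℂ)

/-- `I_{N₁} + ρ₁₁H₁₁H₁₁ᴴ` minus the Schur-complement correction with correlation `Q`. -/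
noncomputable def detMat₂ {N₁ N₂ M₁ M₂ : ℕ} (ρ₁₁ ρ₁₂ : ℝ)
    (H11 : Matrix (Fin N₁) (Fin M₁) ℂ) (H12 : Matrix (Fin N₂) (Fin M₁) ℂ)
    (Q : Matrix (Fin M₁) (Fin M₂) ℂ) : Matrix (Fin N₁) (Fin N₁) ℂ :=
  (1 : Matrix (Fin N₁) (Fin N₁) ℂ) + (ρ₁₁ : ℂ) • (H11 * H11ᴴ) -
    Matrix.fromCols ((Real.sqrt (ρ₁₁ * ρ₁₂) : ℂ) • (H11 * H12ᴴ))
        ((Real.sqrt ρ₁₁ : ℂ) • (H11 * Q)) *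
      (innerBlock ρ₁₂ H12 Q)⁻¹ *
      Matrix.fromRows ((Real.sqrt (ρ₁₁ * ρ₁₂) : ℂ) • (H12 * H11ᴴ))
        ((Real.sqrt ρ₁₁ : ℂ) • (Qᴴ * H11ᴴ))

/-- `I_{N₂} + ρ₁₂ H₁₂H₁₂ᴴ`. -/
noncomputable def detMat₃ {N₂ M₁ : ℕ} (ρ₁₂ : ℝ) (H12 : Matrix (Fin N₂) (Fin M₁) ℂ) :
    Matrix (Fin N₂) (Fin N₂) ℂ :=
  (1 : Matrix (Fin N₂) (Fin N₂) ℂ) + (ρ₁₂ : ℂ) • (H12 * H12ᴴ)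

/-- `I_{N₁} + ρ₁₁H₁₁H₁₁ᴴ − ρ₁₁ρ₁₂ H₁₁H₁₂ᴴ (I + ρ₁₂H₁₂H₁₂ᴴ)⁻¹ H₁₂H₁₁ᴴ`. -/
noncomputable def detMat₄ {N₁ N₂ M₁ : ℕ} (ρ₁₁ ρ₁₂ : ℝ)
    (H11 : Matrix (Fin N₁) (Fin M₁) ℂ) (H12 : Matrix (Fin N₂) (Fin M₁) ℂ) :
    Matrix (Fin N₁) (Fin N₁) ℂ :=
  (1 : Matrix (Fin N₁) (Fin N₁) ℂ) + (ρ₁₁ : ℂ) • (H11 * H11ᴴ) -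
    ((ρ₁₁ * ρ₁₂ : ℝ) : ℂ) •
      (H11 * H12ᴴ * ((1 : Matrix (Fin N₂) (Fin N₂) ℂ) + (ρ₁₂ : ℂ) • (H12 * H12ᴴ))⁻¹ *
        (H12 * H11ᴴ))


/-!
Put `X = √ρ₁₁ H₁₁`, `Y = √ρ₁₂ H₁₂` and `G = [X; Y]`. Expanding over the inner block `D` and then
over the identity block of `D`, the left-hand side is the determinant of
`K = [[I + XXᴴ, [XYᴴ, XQ]], [·, D]]`. After regrouping the indices,
`K = [[I + GGᴴ, GQ], [QᴴGᴴ, I]]`, so `det K = det (I + GGᴴ - GQQᴴGᴴ)`, while the right-hand side is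
`det (I + GGᴴ)` by the same Schur expansion of `I + GGᴴ`. Finally `det (M - VVᴴ) ≤ det M` whenever
`M ≻ 0` and `M - VVᴴ ⪰ 0`, because `det (M - VVᴴ) = det M · det (I - VᴴM⁻¹V)` and
`0 ⪯ I - VᴴM⁻¹V ⪯ I`.
-/

namespace Matrix

variable {𝕜 n l : Type*} [RCLike 𝕜] [Fintype n] [Fintype l]

lemma PosSemidef.det_le_one [DecidableEq n] {A : Matrix n n 𝕜} (hA : A.PosSemidef)
    (h : (1 - A).PosSemidef) : A.det ≤ 1 := by
  have heig (i : n) : hA.1.eigenvalues i ≤ 1 := by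
    set v := hA.1.eigenvectorBasis i
    have hv : RCLike.re (star ⇑v ⬝ᵥ ⇑v) = 1 := by
      rw [dotProduct_comm, ← EuclideanSpace.inner_eq_star_dotProduct, inner_self_eq_norm_sq_to_K,
        hA.1.eigenvectorBasis.orthonormal.1 i]
      simp
    have := h.re_dotProduct_nonneg v
    rw [sub_mulVec, one_mulVec, dotProduct_sub, map_sub, ← hA.1.eigenvalues_eq i, hv] at this
    linarith
  rw [hA.1.det_eq_prod_eigenvalues, ← RCLike.ofReal_prod, ← RCLike.ofReal_one,
    RCLike.ofReal_le_ofReal]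
  exact Finset.prod_le_one (fun i _ => hA.eigenvalues_nonneg i) fun i _ => heig i

lemma PosDef.det_fromBlocks₂₂ [DecidableEq n] [DecidableEq l] {D : Matrix l l 𝕜} (hD : D.PosDef)
    (A : Matrix n n 𝕜) (B : Matrix n l 𝕜) (C : Matrix l n 𝕜) :
    (fromBlocks A B C D).det = D.det * (A - B * D⁻¹ * C).det := by
  have : Invertible D := hD.isUnit.invertible
  rw [Matrix.det_fromBlocks₂₂, invOf_eq_nonsing_inv]

lemma PosSemidef.sub_mul_inv_mul_conjTranspose [DecidableEq l] {A : Matrix n n 𝕜}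
    {B : Matrix n l 𝕜} {D : Matrix l l 𝕜} (hD : D.PosDef) (h : (fromBlocks A B Bᴴ D).PosSemidef) :
    (A - B * D⁻¹ * Bᴴ).PosSemidef := by
  have : Invertible D := hD.isUnit.invertible
  exact (PosDef.fromBlocks₂₂ A B hD).mp h

lemma PosDef.fromBlocks_one₂₂ [DecidableEq n] [DecidableEq l] {A : Matrix n n 𝕜}
    {B : Matrix n l 𝕜} (h : (A - B * Bᴴ).PosDef) : (fromBlocks A B Bᴴ 1).PosDef := by
  have : Invertible (1 : Matrix l l 𝕜) := invertibleOne
  have hpsd : (fromBlocks A B Bᴴ 1).PosSemidef := by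
    rw [PosDef.fromBlocks₂₂ A B PosDef.one, inv_one, Matrix.mul_one]
    exact h.posSemidef
  rw [hpsd.posDef_iff_det_ne_zero, det_fromBlocks_one₂₂]
  exact h.det_pos.ne'

lemma PosDef.det_sub_mul_conjTranspose_le [DecidableEq n] [DecidableEq l] {M : Matrix n n 𝕜}
    (hM : M.PosDef) {V : Matrix n l 𝕜} (h : (M - V * Vᴴ).PosSemidef) :
    (M - V * Vᴴ).det ≤ M.det := by
  have : Invertible M := hM.isUnit.invertible
  have : Invertible (1 : Matrix l l 𝕜) := invertibleOne
  have hblock : (fromBlocks M V Vᴴ 1).PosSemidef := by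
    rwa [PosDef.fromBlocks₂₂ M V PosDef.one, inv_one, Matrix.mul_one]
  have hschur : (1 - Vᴴ * M⁻¹ * V).PosSemidef := (PosDef.fromBlocks₁₁ V 1 hM).mp hblock
  have hW : (Vᴴ * M⁻¹ * V).PosSemidef := hM.inv.posSemidef.conjTranspose_mul_mul_same V
  calc (M - V * Vᴴ).det = M.det * (1 - Vᴴ * M⁻¹ * V).det := by
        rw [← det_fromBlocks_one₂₂, det_fromBlocks₁₁, invOf_eq_nonsing_inv]
    _ ≤ M.det * 1 := by
        gcongr
        · exact hM.det_pos.le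
        · exact hschur.det_le_one (by rwa [sub_sub_cancel])
    _ = M.det := mul_one _

lemma PosSemidef.posDef_one_add_mul_mul_conjTranspose [DecidableEq n] {k : Type*} [Fintype k]
    {P : Matrix k k 𝕜} (hP : P.PosSemidef) (G : Matrix n k 𝕜) : (1 + G * P * Gᴴ).PosDef :=
  PosDef.one.add_posSemidef (hP.mul_mul_conjTranspose_same G)

lemma posDef_one_add_mul_conjTranspose [DecidableEq n] {k : Type*} [Fintype k]
    (G : Matrix n k 𝕜) : (1 + G * Gᴴ).PosDef :=
  PosDef.one.add_posSemidef (posSemidef_self_mul_conjTranspose G)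

lemma fromBlocks_submatrix_sumAssoc {α n₁ n₂ n₃ : Type*} (A : Matrix n₁ n₁ α)
    (B₁ : Matrix n₁ n₂ α) (B₂ : Matrix n₁ n₃ α) (C₁ : Matrix n₂ n₁ α) (C₂ : Matrix n₃ n₁ α)
    (D₁₁ : Matrix n₂ n₂ α) (D₁₂ : Matrix n₂ n₃ α) (D₂₁ : Matrix n₃ n₂ α) (D₂₂ : Matrix n₃ n₃ α) :
    (fromBlocks A (fromCols B₁ B₂) (fromRows C₁ C₂) (fromBlocks D₁₁ D₁₂ D₂₁ D₂₂)).submatrix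
        (Equiv.sumAssoc n₁ n₂ n₃) (Equiv.sumAssoc n₁ n₂ n₃) =
      fromBlocks (fromBlocks A B₁ C₁ D₁₁) (fromRows B₂ D₁₂) (fromCols C₂ D₂₁) D₂₂ := by
  ext ((i | i) | i) ((j | j) | j) <;> rfl

end Matrix

lemma Matrix.one_add_mul_conjTranspose_sub {𝕜 n k l : Type*} [RCLike 𝕜] [DecidableEq n]
    [Fintype k] [DecidableEq k] [Fintype l] (G : Matrix n k 𝕜) (Q : Matrix k l 𝕜) :
    1 + G * Gᴴ - G * Q * (G * Q)ᴴ = 1 + G * (1 - Q * Qᴴ) * Gᴴ := by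
  rw [conjTranspose_mul, Matrix.mul_sub, Matrix.sub_mul, Matrix.mul_one, add_sub_assoc]
  simp only [Matrix.mul_assoc]

lemma Matrix.PosSemidef.posDef_one_add_mul_conjTranspose_sub {𝕜 n k l : Type*} [RCLike 𝕜]
    [Fintype n] [DecidableEq n] [Fintype k] [DecidableEq k] [Fintype l] {Q : Matrix k l 𝕜}
    (hQ : (1 - Q * Qᴴ).PosSemidef) (G : Matrix n k 𝕜) :
    (1 + G * Gᴴ - G * Q * (G * Q)ᴴ).PosDef := by
  rw [one_add_mul_conjTranspose_sub]
  exact hQ.posDef_one_add_mul_mul_conjTranspose G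

lemma Matrix.one_add_fromRows_mul_conjTranspose {𝕜 n₁ n₂ k : Type*} [RCLike 𝕜]
    [DecidableEq n₁] [DecidableEq n₂] [Fintype k] (X : Matrix n₁ k 𝕜) (Y : Matrix n₂ k 𝕜) :
    1 + fromRows X Y * (fromRows X Y)ᴴ =
      fromBlocks (1 + X * Xᴴ) (X * Yᴴ) (X * Yᴴ)ᴴ (1 + Y * Yᴴ) := by
  rw [conjTranspose_fromRows_eq_fromCols_conjTranspose, fromRows_mul_fromCols, ← fromBlocks_one,
    fromBlocks_add, conjTranspose_mul, conjTranspose_conjTranspose]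
  simp

open Matrix

section CorrelatedBlock

variable {𝕜 n k l : Type*} [RCLike 𝕜] [Fintype n] [DecidableEq n] [Fintype k] [DecidableEq k]
  [Fintype l] [DecidableEq l]

/-- The covariance matrix of `(G x + z, Qᴴ x + w)` for independent `x`, `z` standard and `w` of
covariance `1 - Qᴴ Q`. -/
noncomputable def correlatedBlock (G : Matrix n k 𝕜) (Q : Matrix k l 𝕜) :
    Matrix (n ⊕ l) (n ⊕ l) 𝕜 :=
  fromBlocks (1 + G * Gᴴ) (G * Q) (G * Q)ᴴ 1

variable {Q : Matrix k l 𝕜} (hQ : (1 - Q * Qᴴ).PosSemidef)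
include hQ

lemma posDef_correlatedBlock (G : Matrix n k 𝕜) : (correlatedBlock G Q).PosDef :=
  PosDef.fromBlocks_one₂₂ (hQ.posDef_one_add_mul_conjTranspose_sub G)

lemma det_correlatedBlock_le (G : Matrix n k 𝕜) :
    (correlatedBlock G Q).det ≤ (1 + G * Gᴴ).det := by
  rw [correlatedBlock, det_fromBlocks_one₂₂]
  exact (posDef_one_add_mul_conjTranspose G).det_sub_mul_conjTranspose_le
    (hQ.posDef_one_add_mul_conjTranspose_sub G).posSemidef

end CorrelatedBlock

section FromRows

variable {𝕜 n₁ n₂ k l : Type*} [RCLike 𝕜] [DecidableEq n₁] [DecidableEq n₂] [Fintype k]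
  [DecidableEq l] (X : Matrix n₁ k 𝕜) (Y : Matrix n₂ k 𝕜) (Q : Matrix k l 𝕜)

lemma correlatedBlock_fromRows :
    correlatedBlock (fromRows X Y) Q =
      (fromBlocks (1 + X * Xᴴ) (fromCols (X * Yᴴ) (X * Q)) (fromCols (X * Yᴴ) (X * Q))ᴴ
        (correlatedBlock Y Q)).submatrix (Equiv.sumAssoc n₁ n₂ l) (Equiv.sumAssoc n₁ n₂ l) := by
  unfold correlatedBlock
  rw [conjTranspose_fromCols_eq_fromRows_conjTranspose, fromBlocks_submatrix_sumAssoc,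
    ← one_add_fromRows_mul_conjTranspose, ← conjTranspose_fromRows_eq_fromCols_conjTranspose,
    ← fromRows_mul]

variable [Fintype n₁] [Fintype n₂]

lemma posSemidef_one_add_sub_mul_inv_mul :
    (1 + X * Xᴴ - X * Yᴴ * (1 + Y * Yᴴ)⁻¹ * (X * Yᴴ)ᴴ).PosSemidef := by
  refine PosSemidef.sub_mul_inv_mul_conjTranspose (posDef_one_add_mul_conjTranspose Y) ?_
  rw [← one_add_fromRows_mul_conjTranspose]
  exact (posDef_one_add_mul_conjTranspose _).posSemidef

variable [Fintype l] [DecidableEq k] {Q} (hQ : (1 - Q * Qᴴ).PosSemidef)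
include hQ

lemma posSemidef_one_add_sub_fromCols_mul_inv_mul :
    (1 + X * Xᴴ - fromCols (X * Yᴴ) (X * Q) * (correlatedBlock Y Q)⁻¹ *
      (fromCols (X * Yᴴ) (X * Q))ᴴ).PosSemidef := by
  refine PosSemidef.sub_mul_inv_mul_conjTranspose (posDef_correlatedBlock hQ Y) ?_
  rw [← posSemidef_submatrix_equiv (Equiv.sumAssoc n₁ n₂ l), ← correlatedBlock_fromRows]
  exact (posDef_correlatedBlock hQ _).posSemidef

theorem det_mul_det_sub_fromCols_mul_inv_mul_le :
    (1 + Y * Yᴴ - Y * Q * (Y * Q)ᴴ).det *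
        (1 + X * Xᴴ - fromCols (X * Yᴴ) (X * Q) * (correlatedBlock Y Q)⁻¹ *
          (fromCols (X * Yᴴ) (X * Q))ᴴ).det ≤
      (1 + Y * Yᴴ).det * (1 + X * Xᴴ - X * Yᴴ * (1 + Y * Yᴴ)⁻¹ * (X * Yᴴ)ᴴ).det :=
  calc _ = (fromBlocks (1 + X * Xᴴ) (fromCols (X * Yᴴ) (X * Q)) (fromCols (X * Yᴴ) (X * Q))ᴴ
          (correlatedBlock Y Q)).det := by
        rw [(posDef_correlatedBlock hQ Y).det_fromBlocks₂₂, correlatedBlock, det_fromBlocks_one₂₂]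
    _ = (correlatedBlock (fromRows X Y) Q).det := by
        rw [correlatedBlock_fromRows, det_submatrix_equiv_self]
    _ ≤ (1 + fromRows X Y * (fromRows X Y)ᴴ).det := det_correlatedBlock_le hQ _
    _ = _ := by
        rw [one_add_fromRows_mul_conjTranspose,
          (posDef_one_add_mul_conjTranspose Y).det_fromBlocks₂₂]

end FromRows

section DetMat

lemma Matrix.conjTranspose_ofReal_smul {m n : Type*} (r : ℝ) (A : Matrix m n ℂ) :
    ((r : ℂ) • A)ᴴ = (r : ℂ) • Aᴴ := by
  rw [conjTranspose_smul, Complex.star_def, Complex.conj_ofReal]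

variable {N₁ N₂ M₁ M₂ : ℕ} {ρ₁₁ ρ₁₂ : ℝ} (hρ₁₁ : 0 ≤ ρ₁₁) (hρ₁₂ : 0 ≤ ρ₁₂)
  (H11 : Matrix (Fin N₁) (Fin M₁) ℂ) (H12 : Matrix (Fin N₂) (Fin M₁) ℂ)
  (Q : Matrix (Fin M₁) (Fin M₂) ℂ)

include hρ₁₂

lemma detMat₃_eq : detMat₃ ρ₁₂ H12 = 1 + ((√ρ₁₂ : ℂ) • H12) * ((√ρ₁₂ : ℂ) • H12)ᴴ := by
  simp only [detMat₃, conjTranspose_ofReal_smul, Matrix.smul_mul, Matrix.mul_smul, smul_smul,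
    ← Complex.ofReal_mul, Real.mul_self_sqrt hρ₁₂]

lemma detMat₁_eq : detMat₁ ρ₁₂ H12 Q = 1 + ((√ρ₁₂ : ℂ) • H12) * ((√ρ₁₂ : ℂ) • H12)ᴴ -
    ((√ρ₁₂ : ℂ) • H12) * Q * (((√ρ₁₂ : ℂ) • H12) * Q)ᴴ := by
  simp only [detMat₁, conjTranspose_mul, conjTranspose_ofReal_smul, Matrix.smul_mul,
    Matrix.mul_smul, smul_smul, ← Complex.ofReal_mul, Real.mul_self_sqrt hρ₁₂, Matrix.mul_assoc]

lemma innerBlock_eq : innerBlock ρ₁₂ H12 Q = correlatedBlock ((√ρ₁₂ : ℂ) • H12) Q := by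
  simp only [innerBlock, correlatedBlock, conjTranspose_mul, conjTranspose_ofReal_smul,
    Matrix.smul_mul, Matrix.mul_smul, smul_smul, ← Complex.ofReal_mul, Real.mul_self_sqrt hρ₁₂]

include hρ₁₁

lemma detMat₂_eq : detMat₂ ρ₁₁ ρ₁₂ H11 H12 Q = 1 + ((√ρ₁₁ : ℂ) • H11) * ((√ρ₁₁ : ℂ) • H11)ᴴ -
    fromCols (((√ρ₁₁ : ℂ) • H11) * ((√ρ₁₂ : ℂ) • H12)ᴴ) (((√ρ₁₁ : ℂ) • H11) * Q) *
      (correlatedBlock ((√ρ₁₂ : ℂ) • H12) Q)⁻¹ *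
      (fromCols (((√ρ₁₁ : ℂ) • H11) * ((√ρ₁₂ : ℂ) • H12)ᴴ) (((√ρ₁₁ : ℂ) • H11) * Q))ᴴ := by
  rw [← innerBlock_eq hρ₁₂, conjTranspose_fromCols_eq_fromRows_conjTranspose]
  simp only [detMat₂, conjTranspose_mul, conjTranspose_ofReal_smul, conjTranspose_conjTranspose,
    Matrix.smul_mul, Matrix.mul_smul, smul_smul, ← Complex.ofReal_mul, Real.mul_self_sqrt hρ₁₁,
    Real.sqrt_mul hρ₁₁, mul_comm √ρ₁₂ √ρ₁₁]

lemma detMat₄_eq : detMat₄ ρ₁₁ ρ₁₂ H11 H12 = 1 + ((√ρ₁₁ : ℂ) • H11) * ((√ρ₁₁ : ℂ) • H11)ᴴ -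
    ((√ρ₁₁ : ℂ) • H11) * ((√ρ₁₂ : ℂ) • H12)ᴴ *
      (1 + ((√ρ₁₂ : ℂ) • H12) * ((√ρ₁₂ : ℂ) • H12)ᴴ)⁻¹ *
      (((√ρ₁₁ : ℂ) • H11) * ((√ρ₁₂ : ℂ) • H12)ᴴ)ᴴ := by
  have hρ : √ρ₁₂ * √ρ₁₁ * (√ρ₁₂ * √ρ₁₁) = ρ₁₁ * ρ₁₂ := by
    rw [← Real.sqrt_mul hρ₁₂, Real.mul_self_sqrt (mul_nonneg hρ₁₂ hρ₁₁), mul_comm]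
  simp only [detMat₄, conjTranspose_mul, conjTranspose_ofReal_smul, conjTranspose_conjTranspose,
    Matrix.smul_mul, Matrix.mul_smul, smul_smul, ← Complex.ofReal_mul, Real.mul_self_sqrt hρ₁₁,
    Real.mul_self_sqrt hρ₁₂, hρ, Matrix.mul_assoc]

end DetMat

/-- The product of the two correlated determinants is at most the product of the two
uncorrelated ones; all four matrices are Hermitian PSD (so their determinants are
nonnegative reals), and the inner block matrix and `I + ρ₁₂H₁₂H₁₂ᴴ` are positive definite. -/
theorem det_product_correlated_le {N₁ N₂ M₁ M₂ : ℕ} (ρ₁₁ ρ₁₂ : ℝ)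
    (hρ₁₁ : 0 ≤ ρ₁₁) (hρ₁₂ : 0 ≤ ρ₁₂)
    (H11 : Matrix (Fin N₁) (Fin M₁) ℂ) (H12 : Matrix (Fin N₂) (Fin M₁) ℂ)
    (Q : Matrix (Fin M₁) (Fin M₂) ℂ)
    (hQ : ((1 : Matrix (Fin M₁) (Fin M₁) ℂ) - Q * Qᴴ).PosSemidef) :
    (detMat₁ ρ₁₂ H12 Q).PosSemidef ∧ (detMat₂ ρ₁₁ ρ₁₂ H11 H12 Q).PosSemidef ∧
    (detMat₃ ρ₁₂ H12).PosSemidef ∧ (detMat₄ ρ₁₁ ρ₁₂ H11 H12).PosSemidef ∧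
    (innerBlock ρ₁₂ H12 Q).PosDef ∧ (detMat₃ ρ₁₂ H12).PosDef ∧
    ∃ a₁ a₂ b₁ b₂ : ℝ, 0 ≤ a₁ ∧ 0 ≤ a₂ ∧ 0 ≤ b₁ ∧ 0 ≤ b₂ ∧
      (detMat₁ ρ₁₂ H12 Q).det = (a₁ : ℂ) ∧
      (detMat₂ ρ₁₁ ρ₁₂ H11 H12 Q).det = (a₂ : ℂ) ∧
      (detMat₃ ρ₁₂ H12).det = (b₁ : ℂ) ∧
      (detMat₄ ρ₁₁ ρ₁₂ H11 H12).det = (b₂ : ℂ) ∧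
      a₁ * a₂ ≤ b₁ * b₂ := by
  rw [detMat₁_eq hρ₁₂, detMat₂_eq hρ₁₁ hρ₁₂, detMat₃_eq hρ₁₂, detMat₄_eq hρ₁₁ hρ₁₂,
    innerBlock_eq hρ₁₂]
  set X := (√ρ₁₁ : ℂ) • H11
  set Y := (√ρ₁₂ : ℂ) • H12
  have h₁ := (hQ.posDef_one_add_mul_conjTranspose_sub Y).posSemidef
  have h₂ := posSemidef_one_add_sub_fromCols_mul_inv_mul X Y hQ
  have h₃ := posDef_one_add_mul_conjTranspose Y
  have h₄ := posSemidef_one_add_sub_mul_inv_mul X Y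
  obtain ⟨a₁, ha₁, hdet₁⟩ := RCLike.nonneg_iff_exists_ofReal.mp h₁.det_nonneg
  obtain ⟨a₂, ha₂, hdet₂⟩ := RCLike.nonneg_iff_exists_ofReal.mp h₂.det_nonneg
  obtain ⟨b₁, hb₁, hdet₃⟩ := RCLike.nonneg_iff_exists_ofReal.mp h₃.posSemidef.det_nonneg
  obtain ⟨b₂, hb₂, hdet₄⟩ := RCLike.nonneg_iff_exists_ofReal.mp h₄.det_nonneg
  have hle := det_mul_det_sub_fromCols_mul_inv_mul_le X Y hQ
  rw [← hdet₁, ← hdet₂, ← hdet₃, ← hdet₄] at hle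
  exact ⟨h₁, h₂, h₃.posSemidef, h₄, posDef_correlatedBlock hQ Y, h₃, a₁, a₂, b₁, b₂,
    ha₁, ha₂, hb₁, hb₂, hdet₁.symm, hdet₂.symm, hdet₃.symm, hdet₄.symm, by exact_mod_cast hle⟩
end

section
/- Let A be an N×M₁ complex matrix and B an N×M₂ complex matrix. Then det(I_N + A A† + B B†) = det(I_{M₂} + B† B) · det(I_{M₁} + A† A − A† B (I_{M₂} + B† B)^{-1} B† A), where I_{M₂} + B† B is Hermitian positive definite, hence invertible. -/
open scoped ComplexOrder Matrix

/-!
Writing `A Aᴴ + B Bᴴ = [A B] [A B]ᴴ`, Sylvester's identity `det (1 + X Y) = det (1 + Y X)` turns the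
left-hand side into the determinant of the `2 × 2` block matrix `1 + [A B]ᴴ [A B]`, and the Schur
complement of its invertible lower-right block `1 + Bᴴ B` gives the factorization.
-/

namespace Matrix

variable {m n p : Type*} [Fintype m] [Fintype n] [Fintype p] [DecidableEq n] [DecidableEq p]

theorem PosDef.one_add_conjTranspose_mul_self {𝕜 : Type*} [RCLike 𝕜] (B : Matrix m n 𝕜) :
    (1 + Bᴴ * B).PosDef :=
  PosDef.one.add_posSemidef (posSemidef_conjTranspose_mul_self B)

theorem det_one_add_mul_add_mul [DecidableEq m] {R : Type*} [CommRing R]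
    (A : Matrix p m R) (C : Matrix m p R) (B : Matrix p n R) (D : Matrix n p R) :
    det (1 + A * C + B * D) = det (fromBlocks (1 + C * A) (C * B) (D * A) (1 + D * B)) :=
  calc det (1 + A * C + B * D) = det (1 + fromCols A B * fromRows C D) := by
        rw [fromCols_mul_fromRows, add_assoc]
    _ = det (1 + fromRows C D * fromCols A B) := det_one_add_mul_comm _ _
    _ = det (fromBlocks (1 + C * A) (C * B) (D * A) (1 + D * B)) := by
        rw [fromRows_mul_fromCols, ← fromBlocks_one, fromBlocks_add, zero_add, zero_add]

end Matrix

/-- For `A : N×M₁` and `B : N×M₂` complex matrices: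
`det(I + AAᴴ + BBᴴ) = det(I + BᴴB) · det(I + AᴴA − AᴴB (I + BᴴB)⁻¹ BᴴA)`,
and `I + BᴴB` is Hermitian positive definite (hence invertible). -/
theorem det_sum_factorization {M₁ M₂ N : ℕ}
    (A : Matrix (Fin N) (Fin M₁) ℂ) (B : Matrix (Fin N) (Fin M₂) ℂ) :
    ((1 : Matrix (Fin M₂) (Fin M₂) ℂ) + Bᴴ * B).PosDef ∧
    ((1 : Matrix (Fin N) (Fin N) ℂ) + A * Aᴴ + B * Bᴴ).det =
      ((1 : Matrix (Fin M₂) (Fin M₂) ℂ) + Bᴴ * B).det *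
        ((1 : Matrix (Fin M₁) (Fin M₁) ℂ) + Aᴴ * A -
          Aᴴ * B * ((1 : Matrix (Fin M₂) (Fin M₂) ℂ) + Bᴴ * B)⁻¹ * (Bᴴ * A)).det := by
  have hpos := Matrix.PosDef.one_add_conjTranspose_mul_self B
  refine ⟨hpos, ?_⟩
  let := hpos.isUnit.invertible
  rw [Matrix.det_one_add_mul_add_mul, Matrix.det_fromBlocks₂₂, Matrix.invOf_eq_nonsing_inv]
end

section
/- Let ρ₁₁, ρ₁₂, ρ₂₂ ≥ 0 be real numbers, H₁₁ an N₁×M₁ complex matrix, H₁₂ an N₂×M₁ complex matrix, and H₂₂ an N₂×M₂ complex matrix. Then det(I_{N₂} + ρ₂₂ H₂₂ H₂₂† + ρ₁₂ H₁₂ H₁₂†) · det(I_{N₁} + ρ₁₁ H₁₁ H₁₁† − ρ₁₁ ρ₁₂ H₁₁ H₁₂† (I_{N₂} + ρ₁₂ H₁₂ H₁₂†)^{-1} H₁₂ H₁₁†) = det(I_{M₁} + ρ₁₁ H₁₁† H₁₁ + ρ₁₂ H₁₂† H₁₂) · det(I_{M₂} + ρ₂₂ H₂₂† H₂₂ − ρ₂₂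 ρ₁₂ H₂₂† H₁₂ (I_{M₁} + ρ₁₂ H₁₂† H₁₂)^{-1} H₁₂† H₂₂); i.e., the fifth outer bound for the MIMO IC with feedback equals the sixth outer bound of its reciprocal channel. The matrices I_{N₂} + ρ₁₂ H₁₂ H₁₂† and I_{M₁} + ρ₁₂ H₁₂† H₁₂ are Hermitian positive definite, hence invertible. -/
open scoped ComplexOrder Matrix

/-!
With `B = I + ρ₁₂ H₁₂ H₁₂ᴴ` and `C = I + ρ₁₂ H₁₂ᴴ H₁₂`, the Woodbury identity gives
`C⁻¹ = I - ρ₁₂ H₁₂ᴴ B⁻¹ H₁₂` and `B⁻¹ = I - ρ₁₂ H₁₂ C⁻¹ H₁₂ᴴ`, so the two Schur-complement factors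
are `I + ρ₁₁ H₁₁ C⁻¹ H₁₁ᴴ` and `I + ρ₂₂ H₂₂ᴴ B⁻¹ H₂₂`. By the matrix determinant lemma their
determinants are `det (C + ρ₁₁ H₁₁ᴴ H₁₁) / det C` and `det (B + ρ₂₂ H₂₂ H₂₂ᴴ) / det B`, and
`det B = det C` by Sylvester's identity, so both sides equal
`det (B + ρ₂₂ H₂₂ H₂₂ᴴ) · det (C + ρ₁₁ H₁₁ᴴ H₁₁) / det B`.
-/

namespace Matrix

variable {α : Type*} [CommRing α] {m n p : Type*} [Fintype m] [Fintype n] [Fintype p]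
  [DecidableEq m] [DecidableEq n] [DecidableEq p]

theorem inv_one_add_mul_eq_one_sub (A : Matrix n m α) (B : Matrix m n α)
    (h : IsUnit (1 + A * B).det) : (1 + B * A)⁻¹ = 1 - B * (1 + A * B)⁻¹ * A := by
  have := add_mul_mul_inv_eq_sub (1 : Matrix m m α) B 1 A isUnit_one isUnit_one
    (by simpa [isUnit_iff_isUnit_det] using h)
  simpa using this

theorem det_one_add_mul_sub_mul_det_one_add_mul (A : Matrix n m α) (B : Matrix m n α)
    (G : Matrix p m α) (F : Matrix m p α) (h : IsUnit (1 + A * B).det) :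
    (1 + G * F - G * B * (1 + A * B)⁻¹ * (A * F)).det * (1 + B * A).det
      = (1 + B * A + F * G).det := by
  have hBA : IsUnit (1 + B * A).det := det_one_add_mul_comm A B ▸ h
  have hschur : 1 + G * F - G * B * (1 + A * B)⁻¹ * (A * F) = 1 + G * (1 + B * A)⁻¹ * F := by
    rw [inv_one_add_mul_eq_one_sub A B h]
    simp only [Matrix.mul_sub, Matrix.sub_mul, Matrix.mul_one, Matrix.mul_assoc]
    abel
  rw [hschur, det_add_mul F G hBA, mul_comm]

theorem det_one_add_smul_mul_sub_smul_mul_det_one_add_smul_mul (σ ρ : α)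
    (A : Matrix n m α) (B : Matrix m n α) (G : Matrix p m α) (F : Matrix m p α)
    (h : IsUnit (1 + ρ • (A * B)).det) :
    (1 + σ • (G * F) - (σ * ρ) • (G * B * (1 + ρ • (A * B))⁻¹ * (A * F))).det
        * (1 + ρ • (B * A)).det
      = (1 + σ • (F * G) + ρ • (B * A)).det := by
  have := det_one_add_mul_sub_mul_det_one_add_mul (ρ • A) B G (σ • F) (by simpa using h)
  simp only [Matrix.smul_mul, Matrix.mul_smul, smul_smul] at this
  rw [add_right_comm, ← this]

end Matrix

theorem Matrix.isUnit_det_one_add_smul_mul_conjTranspose {𝕜 : Type*} [RCLike 𝕜] {n m : Type*}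
    [Fintype n] [DecidableEq n] [Fintype m] {ρ : 𝕜} (hρ : 0 ≤ ρ) (H : Matrix n m 𝕜) :
    IsUnit (1 + ρ • (H * Hᴴ)).det :=
  Matrix.isUnit_iff_isUnit_det _ |>.mp
    (Matrix.PosDef.one.add_posSemidef (H.posSemidef_self_mul_conjTranspose.smul hρ)).isUnit

theorem reciprocity_fifth_bound_general {N₁ N₂ M₁ M₂ : ℕ} (ρ₁₁ ρ₁₂ ρ₂₂ : ℝ)
    (hρ₁₂ : 0 ≤ ρ₁₂)
    (H11 : Matrix (Fin N₁) (Fin M₁) ℂ) (H12 : Matrix (Fin N₂) (Fin M₁) ℂ)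
    (H22 : Matrix (Fin N₂) (Fin M₂) ℂ) :
    ((1 : Matrix (Fin N₂) (Fin N₂) ℂ) + (ρ₂₂ : ℂ) • (H22 * H22ᴴ) +
        (ρ₁₂ : ℂ) • (H12 * H12ᴴ)).det *
      ((1 : Matrix (Fin N₁) (Fin N₁) ℂ) + (ρ₁₁ : ℂ) • (H11 * H11ᴴ) -
        ((ρ₁₁ * ρ₁₂ : ℝ) : ℂ) •
          (H11 * H12ᴴ * ((1 : Matrix (Fin N₂) (Fin N₂) ℂ) + (ρ₁₂ : ℂ) • (H12 * H12ᴴ))⁻¹ *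
            (H12 * H11ᴴ))).det
    = ((1 : Matrix (Fin M₁) (Fin M₁) ℂ) + (ρ₁₁ : ℂ) • (H11ᴴ * H11) +
          (ρ₁₂ : ℂ) • (H12ᴴ * H12)).det *
        ((1 : Matrix (Fin M₂) (Fin M₂) ℂ) + (ρ₂₂ : ℂ) • (H22ᴴ * H22) -
          ((ρ₂₂ * ρ₁₂ : ℝ) : ℂ) •
            (H22ᴴ * H12 * ((1 : Matrix (Fin M₁) (Fin M₁) ℂ) + (ρ₁₂ : ℂ) • (H12ᴴ * H12))⁻¹ *
              (H12ᴴ * H22))).det := by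
  have hρ : 0 ≤ (ρ₁₂ : ℂ) := Complex.zero_le_real.mpr hρ₁₂
  have hout := Matrix.isUnit_det_one_add_smul_mul_conjTranspose hρ H12
  have hin := Matrix.isUnit_det_one_add_smul_mul_conjTranspose hρ H12ᴴ
  rw [Matrix.conjTranspose_conjTranspose] at hin
  have sylvester : ((1 : Matrix (Fin N₂) (Fin N₂) ℂ) + (ρ₁₂ : ℂ) • (H12 * H12ᴴ)).det
      = ((1 : Matrix (Fin M₁) (Fin M₁) ℂ) + (ρ₁₂ : ℂ) • (H12ᴴ * H12)).det := by
    rw [← Matrix.smul_mul, Matrix.det_one_add_mul_comm, Matrix.mul_smul]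
  rw [Complex.ofReal_mul, Complex.ofReal_mul,
    ← Matrix.det_one_add_smul_mul_sub_smul_mul_det_one_add_smul_mul _ _ H12 H12ᴴ H11 H11ᴴ hout,
    ← Matrix.det_one_add_smul_mul_sub_smul_mul_det_one_add_smul_mul _ _ H12ᴴ H12 H22ᴴ H22 hin,
    sylvester]
  ring

/-- Reciprocity of the fifth/sixth outer bounds: for `ρ₁₁, ρ₁₂, ρ₂₂ ≥ 0`,
`H₁₁ : N₁×M₁`, `H₁₂ : N₂×M₁`, `H₂₂ : N₂×M₂`,
`det(I + ρ₂₂H₂₂H₂₂ᴴ + ρ₁₂H₁₂H₁₂ᴴ) · det(I + ρ₁₁H₁₁H₁₁ᴴ − ρ₁₁ρ₁₂H₁₁H₁₂ᴴ(I + ρ₁₂H₁₂H₁₂ᴴ)⁻¹H₁₂H₁₁ᴴ)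
 = det(I + ρ₁₁H₁₁ᴴH₁₁ + ρ₁₂H₁₂ᴴH₁₂) · det(I + ρ₂₂H₂₂ᴴH₂₂ − ρ₂₂ρ₁₂H₂₂ᴴH₁₂(I + ρ₁₂H₁₂ᴴH₁₂)⁻¹H₁₂ᴴH₂₂)`. -/
theorem reciprocity_fifth_bound {N₁ N₂ M₁ M₂ : ℕ} (ρ₁₁ ρ₁₂ ρ₂₂ : ℝ)
    (hρ₁₁ : 0 ≤ ρ₁₁) (hρ₁₂ : 0 ≤ ρ₁₂) (hρ₂₂ : 0 ≤ ρ₂₂)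
    (H11 : Matrix (Fin N₁) (Fin M₁) ℂ) (H12 : Matrix (Fin N₂) (Fin M₁) ℂ)
    (H22 : Matrix (Fin N₂) (Fin M₂) ℂ) :
    ((1 : Matrix (Fin N₂) (Fin N₂) ℂ) + (ρ₂₂ : ℂ) • (H22 * H22ᴴ) +
        (ρ₁₂ : ℂ) • (H12 * H12ᴴ)).det *
      ((1 : Matrix (Fin N₁) (Fin N₁) ℂ) + (ρ₁₁ : ℂ) • (H11 * H11ᴴ) -
        ((ρ₁₁ * ρ₁₂ : ℝ) : ℂ) •
          (H11 * H12ᴴ * ((1 : Matrix (Fin N₂) (Fin N₂) ℂ) + (ρ₁₂ : ℂ) • (H12 * H12ᴴ))⁻¹ *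
            (H12 * H11ᴴ))).det
    = ((1 : Matrix (Fin M₁) (Fin M₁) ℂ) + (ρ₁₁ : ℂ) • (H11ᴴ * H11) +
          (ρ₁₂ : ℂ) • (H12ᴴ * H12)).det *
        ((1 : Matrix (Fin M₂) (Fin M₂) ℂ) + (ρ₂₂ : ℂ) • (H22ᴴ * H22) -
          ((ρ₂₂ * ρ₁₂ : ℝ) : ℂ) •
            (H22ᴴ * H12 * ((1 : Matrix (Fin M₁) (Fin M₁) ℂ) + (ρ₁₂ : ℂ) • (H12ᴴ * H12))⁻¹ *
              (H12ᴴ * H22))).det :=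
  reciprocity_fifth_bound_general ρ₁₁ ρ₁₂ ρ₂₂ hρ₁₂ H11 H12 H22
end

section
/- Let H be an N×M complex matrix of rank min(M, N) and let α ≥ 0 be a real number. For each real x > 1, the matrix I_N + x^α H H† is Hermitian positive definite, so its determinant is a positive real number. Then the function x ↦ log det(I_N + x^α H H†) / log x tends to α · min(M, N) as x → ∞. -/
open scoped ComplexOrder Matrix

/-!
If `μᵢ ≥ 0` are the eigenvalues of `H Hᴴ`, then `det (1 + x ^ α H Hᴴ) = ∏ᵢ (1 + x ^ α μᵢ)`.
A factor with `μᵢ > 0` has logarithm `α log x + log (x ^ (-α) + μᵢ) = α log x + O(1)`, a factor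
with `μᵢ = 0` has logarithm `0`, and the number of nonzero `μᵢ` is `rank (H Hᴴ) = rank H`.
-/

open Filter Topology Real

theorem tendsto_log_one_add_rpow_mul_div_log {α c : ℝ} (hα : 0 ≤ α) (hc : 0 < c) :
    Tendsto (fun x : ℝ => log (1 + x ^ α * c) / log x) atTop (𝓝 α) := by
  obtain ⟨L, hL, hlim⟩ : ∃ L, 0 < L ∧ Tendsto (fun x : ℝ => x ^ (-α) + c) atTop (𝓝 L) := by
    rcases hα.eq_or_lt with rfl | hα
    · exact ⟨1 + c, by positivity, by simp⟩
    · exact ⟨0 + c, by simpa using hc, (tendsto_rpow_neg_atTop hα).add tendsto_const_nhds⟩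
  have hlim' : Tendsto (fun x : ℝ => α + log (x ^ (-α) + c) / log x) atTop (𝓝 α) := by
    simpa using (((continuousAt_log hL.ne').tendsto.comp hlim).div_atTop
      tendsto_log_atTop).const_add α
  refine hlim'.congr' ?_
  filter_upwards [eventually_gt_atTop 1] with x hx
  have hx0 : 0 < x := one_pos.trans hx
  have hfactor : 1 + x ^ α * c = x ^ α * (x ^ (-α) + c) := by
    rw [mul_add, ← rpow_add hx0, add_neg_cancel, rpow_zero]
  rw [hfactor, log_mul (rpow_pos_of_pos hx0 α).ne' (by positivity), log_rpow hx0, add_div,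
    mul_div_cancel_right₀ _ (log_pos hx).ne']

theorem tendsto_log_one_add_rpow_mul_div_log_of_nonneg {α c : ℝ} (hα : 0 ≤ α) (hc : 0 ≤ c) :
    Tendsto (fun x : ℝ => log (1 + x ^ α * c) / log x) atTop (𝓝 (if c = 0 then 0 else α)) := by
  rcases hc.eq_or_lt with rfl | hc
  · simp
  · simpa [hc.ne'] using tendsto_log_one_add_rpow_mul_div_log hα hc

namespace Matrix

variable {n 𝕜 : Type*} [Fintype n] [DecidableEq n] [RCLike 𝕜]

theorem IsHermitian.det_one_add_smul {A : Matrix n n 𝕜} (hA : A.IsHermitian) (c : ℝ) :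
    det (1 + (c : 𝕜) • A) = ∏ i, ((1 + c * hA.eigenvalues i : ℝ) : 𝕜) := by
  have hcfc : 1 + (c : 𝕜) • A = cfc (fun t : ℝ => 1 + c * t) A := by
    rw [cfc_add .., cfc_const_mul .., cfc_const_one .., cfc_id' ..,
      RCLike.real_smul_eq_coe_smul (K := 𝕜)]
  rw [hcfc, hA.cfc_eq]
  simp [IsHermitian.cfc, -Unitary.conjStarAlgAut_apply]

theorem PosSemidef.tendsto_log_det_one_add_rpow_smul_div_log {A : Matrix n n 𝕜}
    (hA : A.PosSemidef) {α : ℝ} (hα : 0 ≤ α) :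
    Tendsto (fun x : ℝ => log (RCLike.re (det (1 + ((x ^ α : ℝ) : 𝕜) • A))) / log x) atTop
      (𝓝 (α * A.rank)) := by
  set μ := hA.isHermitian.eigenvalues
  have hsum : ∑ i, (if μ i = 0 then 0 else α) = α * A.rank := by
    rw [hA.isHermitian.rank_eq_card_non_zero_eigs, Fintype.card_subtype, Finset.sum_ite,
      Finset.sum_const_zero, zero_add, Finset.sum_const, nsmul_eq_mul, mul_comm]
  rw [← hsum]
  refine (tendsto_finsetSum _ fun i _ =>
    tendsto_log_one_add_rpow_mul_div_log_of_nonneg hα (hA.eigenvalues_nonneg i)).congr' ?_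
  filter_upwards [eventually_gt_atTop 0] with x hx
  have hfactor_pos : ∀ i, 0 < 1 + x ^ α * μ i := fun i =>
    add_pos_of_pos_of_nonneg one_pos (mul_nonneg (rpow_nonneg hx.le α) (hA.eigenvalues_nonneg i))
  rw [hA.isHermitian.det_one_add_smul, ← RCLike.ofReal_prod, RCLike.ofReal_re,
    log_prod fun i _ => (hfactor_pos i).ne', Finset.sum_div]

end Matrix

open Matrix in
/-- For a full-rank N×M complex matrix `H` (rank `min M N`) and `α ≥ 0`: for every `x > 1`
the matrix `I + x^α H Hᴴ` is Hermitian positive definite (so its determinant is a positive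
real), and `log det(I + x^α H Hᴴ) / log x → α · min M N` as `x → ∞`. -/
theorem log_det_growth {M N : ℕ} (H : Matrix (Fin N) (Fin M) ℂ)
    (hrank : H.rank = min M N) (α : ℝ) (hα : 0 ≤ α) :
    (∀ x : ℝ, 1 < x →
      ((1 : Matrix (Fin N) (Fin N) ℂ) + ((x ^ α : ℝ) : ℂ) • (H * Hᴴ)).PosDef) ∧
    Filter.Tendsto
      (fun x : ℝ =>
        Real.log (((1 : Matrix (Fin N) (Fin N) ℂ) + ((x ^ α : ℝ) : ℂ) • (H * Hᴴ)).det.re) /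
          Real.log x)
      Filter.atTop (nhds (α * (min M N : ℝ))) := by
  have hHH := posSemidef_self_mul_conjTranspose H
  refine ⟨fun x hx => PosDef.one.add_posSemidef
    (hHH.smul (Complex.zero_le_real.mpr (rpow_nonneg (by linarith) α))), ?_⟩
  have h := hHH.tendsto_log_det_one_add_rpow_smul_div_log hα
  rwa [rank_self_mul_conjTranspose, hrank, Nat.cast_min] at h
end
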